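/- For n ≥ 4, the poset P_n (two butterfly posets T_n glued along 0̂ and 1̂) does not admit any triple assignment, and hence does not admit any R-labeling. -/

import Mathlib

open Finset

section ChainDefs
variable {α : Type*} [PartialOrder α]

/-- `l` is a saturated (maximal) chain from `x` to `y`, given as a list. -/
def SatChain (x y : α) (l : List α) : Prop :=
  l.Chain' (· ⋖ ·) ∧ l.head? = some x ∧ l.getLast? = some y

/-- A chain is rising for `τ` (where `true` codes the letter 𝐚 and `false` codes 𝐛)
if every consecutive triple is mapped to 𝐚. -/
def RisingOn (τ : α → α → α → Bool) (l : List α) : Prop :=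
  ∀ (i : ℕ) (h : i + 2 < l.length),
    τ (l.get ⟨i, by omega⟩) (l.get ⟨i + 1, by omega⟩) (l.get ⟨i + 2, by omega⟩) = true

/-- A triple assignment: every non-trivial interval has a unique rising maximal chain. -/
def IsTripleAssignment (τ : α → α → α → Bool) : Prop :=
  ∀ x y : α, x < y → ∃! l : List α, SatChain x y l ∧ RisingOn τ l

/-- An `R`-labeling with label set `Λ` and relation `sim`: every non-trivial interval
has a unique maximal chain whose successive labels are related by `sim`. -/
def IsRLabeling {Λ : Type*} (sim : Λ → Λ → Prop) (lab : α → α → Λ) : Prop :=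
  ∀ x y : α, x < y → ∃! l : List α,
    SatChain x y l ∧ ∀ (i : ℕ) (h : i + 2 < l.length),
      sim (lab (l.get ⟨i, by omega⟩) (l.get ⟨i + 1, by omega⟩))
          (lab (l.get ⟨i + 1, by omega⟩) (l.get ⟨i + 2, by omega⟩))

/-- `y` is a breakpoint for `τ`: the value `τ x y z` does not depend on `x ⋖ y` and `y ⋖ z`. -/
def IsBreakpoint (τ : α → α → α → Bool) (y : α) : Prop :=
  ∃ v : Bool, ∀ x z : α, x ⋖ y → y ⋖ z → τ x y z = v

end ChainDefs

section FlagDefs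
variable {α : Type*} [PartialOrder α] [BoundedOrder α]

/-- `rk` is a rank function making the bounded poset graded. -/
def IsGraded (rk : α → ℕ) : Prop :=
  rk ⊥ = 0 ∧ ∀ x y : α, x ⋖ y → rk y = rk x + 1

/-- Flag `f`-vector entry: the number of chains `0̂ < x₁ < ⋯ < x_k < 1̂`
passing exactly through the ranks in `S`. -/
noncomputable def flagF (rk : α → ℕ) (S : Finset ℕ) : ℕ :=
  Nat.card {c : Finset α // IsChain (· ≤ ·) (↑c : Set α) ∧ c.image rk = S ∧
    c.card = S.card ∧ ∀ x ∈ c, ⊥ < x ∧ x < ⊤}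

/-- Flag `h`-vector entry: `h_S = ∑_{T ⊆ S} (-1)^{|S∖T|} f_T`. -/
noncomputable def flagH (rk : α → ℕ) (S : Finset ℕ) : ℤ :=
  ∑ T ∈ S.powerset, (-1) ^ (S.card - T.card) * (flagF rk T : ℤ)

/-- The descent set of a maximal chain `0̂ = x₀ ⋖ x₁ ⋖ ⋯ ⋖ x_n = 1̂` with respect to `τ`:
those `i` with `τ (x_{i-1}) (x_i) (x_{i+1}) = 𝐛`. -/
def descSet (τ : α → α → α → Bool) (l : List α) : Finset ℕ :=
  (Finset.Icc 1 (l.length - 2)).filter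
    (fun i => τ (l.getD (i - 1) ⊥) (l.getD i ⊥) (l.getD (i + 1) ⊥) = false)

end FlagDefs

/-- The butterfly poset `T_n`: one element at ranks `0` and `n` and two elements
(`side = true/false`) at each rank `1 ≤ i ≤ n-1`; any two elements of distinct
ranks are comparable. -/
structure Butt (n : ℕ) where
  rk : ℕ
  side : Bool
  hle : rk ≤ n
  hb : rk = 0 ∨ rk = n → side = false

theorem Butt.ext' {n : ℕ} {x y : Butt n} (h1 : x.rk = y.rk) (h2 : x.side = y.side) :
    x = y := by
  cases x; cases y; simp_all

instance {n : ℕ} : PartialOrder (Butt n) where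
  le x y := x = y ∨ x.rk < y.rk
  le_refl x := Or.inl rfl
  le_trans x y z hxy hyz := by
    rcases hxy with rfl | h
    · exact hyz
    · rcases hyz with rfl | h'
      · exact Or.inr h
      · exact Or.inr (h.trans h')
  le_antisymm x y hxy hyx := by
    rcases hxy with rfl | h
    · rfl
    · rcases hyx with rfl | h'
      · rfl
      · omega

instance {n : ℕ} : BoundedOrder (Butt n) where
  bot := ⟨0, false, Nat.zero_le n, fun _ => rfl⟩
  top := ⟨n, false, le_refl n, fun _ => rfl⟩
  bot_le x := by
    by_cases h : x.rk = 0
    · exact Or.inl (Butt.ext' h.symm (x.hb (Or.inl h)).symm)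
    · exact Or.inr (by simpa using Nat.pos_of_ne_zero h)
  le_top x := by
    by_cases h : x.rk = n
    · exact Or.inl (Butt.ext' h (x.hb (Or.inr h)))
    · exact Or.inr (lt_of_le_of_ne x.hle h)

/-- The poset `P_n`: two copies (`copy = true/false`) of the butterfly poset `T_n`
glued along their minimum and maximum elements. -/
structure Glue (n : ℕ) where
  rk : ℕ
  side : Bool
  copy : Bool
  hle : rk ≤ n
  hb : rk = 0 ∨ rk = n → side = false ∧ copy = false

theorem Glue.ext' {n : ℕ} {x y : Glue n} (h1 : x.rk = y.rk) (h2 : x.side = y.side)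
    (h3 : x.copy = y.copy) : x = y := by
  cases x; cases y; simp_all

instance {n : ℕ} : PartialOrder (Glue n) where
  le x y := x = y ∨ (x.rk < y.rk ∧ (x.copy = y.copy ∨ x.rk = 0 ∨ y.rk = n))
  le_refl x := Or.inl rfl
  le_trans x y z hxy hyz := by
    rcases hxy with rfl | ⟨h1, h2⟩
    · exact hyz
    · rcases hyz with rfl | ⟨h3, h4⟩
      · exact Or.inr ⟨h1, h2⟩
      · refine Or.inr ⟨h1.trans h3, ?_⟩
        rcases h2 with hc | h0 | hn
        · rcases h4 with hc' | h0' | hn'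
          · exact Or.inl (hc.trans hc')
          · omega
          · exact Or.inr (Or.inr hn')
        · exact Or.inr (Or.inl h0)
        · have := z.hle; omega
  le_antisymm x y hxy hyx := by
    rcases hxy with rfl | ⟨h1, _⟩
    · rfl
    · rcases hyx with rfl | ⟨h2, _⟩
      · rfl
      · omega

instance {n : ℕ} : BoundedOrder (Glue n) where
  bot := ⟨0, false, false, Nat.zero_le n, fun _ => ⟨rfl, rfl⟩⟩
  top := ⟨n, false, false, le_refl n, fun _ => ⟨rfl, rfl⟩⟩
  bot_le x := by
    by_cases h : x.rk = 0
    · exact Or.inl (Glue.ext' h.symm (x.hb (Or.inl h)).1.symm (x.hb (Or.inl h)).2.symm)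
    · exact Or.inr ⟨by simpa using Nat.pos_of_ne_zero h, Or.inr (Or.inl rfl)⟩
  le_top x := by
    by_cases h : x.rk = n
    · exact Or.inl (Glue.ext' h (x.hb (Or.inr h)).1 (x.hb (Or.inr h)).2)
    · exact Or.inr ⟨lt_of_le_of_ne x.hle h, Or.inr (Or.inr rfl)⟩

/-- Eulerian condition (counting form): every non-trivial interval has as many
elements of even rank as of odd rank. -/
def EulerianCount {α : Type*} [PartialOrder α] (rk : α → ℕ) : Prop :=
  ∀ x y : α, x < y →
    Nat.card {z : α // z ∈ Set.Icc x y ∧ Even (rk z - rk x)} =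
    Nat.card {z : α // z ∈ Set.Icc x y ∧ ¬ Even (rk z - rk x)}

section AbIndex

/-- The variable 𝐚 of the non-commutative polynomial ring `ℤ⟨𝐚,𝐛⟩`,
realized as the monoid algebra of the free monoid on two letters. -/
noncomputable def abA : MonoidAlgebra ℤ (FreeMonoid Bool) :=
  MonoidAlgebra.single (FreeMonoid.ofList [true]) 1

/-- The variable 𝐛. -/
noncomputable def abB : MonoidAlgebra ℤ (FreeMonoid Bool) :=
  MonoidAlgebra.single (FreeMonoid.ofList [false]) 1

/-- The 𝐚𝐛-monomial `u_S` of length `n-1`, with 𝐛 in the positions of `S`. -/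
def abMonomial (n : ℕ) (S : Finset ℕ) : FreeMonoid Bool :=
  FreeMonoid.ofList ((List.range (n - 1)).map (fun j => decide ((j + 1) ∉ S)))

/-- The 𝐚𝐛-index `Ψ(P) = ∑_S h_S u_S` of a bounded poset of rank `n`
with rank function `rk`. -/
noncomputable def abIndex {α : Type*} [PartialOrder α] [BoundedOrder α]
    (rk : α → ℕ) (n : ℕ) : MonoidAlgebra ℤ (FreeMonoid Bool) :=
  ∑ S ∈ (Finset.Icc 1 (n - 1)).powerset,
    MonoidAlgebra.single (abMonomial n S) (flagH rk S)

/-- The weight `wt(c)` of a maximal chain, as an 𝐚𝐛-monomial. -/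
def chainWeight {α : Type*} [PartialOrder α] [OrderBot α]
    (τ : α → α → α → Bool) (l : List α) : FreeMonoid Bool :=
  FreeMonoid.ofList ((List.range (l.length - 2)).map
    (fun i => τ (l.getD i ⊥) (l.getD (i + 1) ⊥) (l.getD (i + 2) ⊥)))

end AbIndex

/-!
For each copy `q` there is a rising maximal chain of `[0̂, 1̂]` whose rank-2 element lies in
copy `q`; two such chains for different copies contradict uniqueness for `[0̂, 1̂]`.

To build it, fix `z₀` of rank 2 in copy `q` and let `w` be the rank-3 element of the rising chain
of `[z₀, 1̂]`; since `n ≥ 4`, `w` is not `1̂`, so it lies in copy `q`. The rising chain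
`0̂ ⋖ y ⋖ z ⋖ w` of `[0̂, w]` stays in copy `q`, where `y` has exactly the two upper covers of rank 2.
If the rising chain of `[y, 1̂]` runs through `z₀ ≠ z`, it continues with `w`, and then `[y, w]`
has two rising chains. Hence some rising chain of `[y, 1̂]` starts `y ⋖ z`, and prefixing `0̂`
keeps it rising because `τ 0̂ y z = 𝐚`.

An `R`-labeling induces a triple assignment, so it cannot exist either.
-/

section Chains

variable {α : Type*} {τ : α → α → α → Bool} {x y z w t : α} {l : List α}

theorem RisingOn.tail (h : RisingOn τ (x :: l)) : RisingOn τ l :=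
  fun i hi => by simpa using h (i + 1) (by simp; omega)

theorem risingOn_pair : RisingOn τ [x, y] :=
  fun i hi => by simp at hi

theorem risingOn_cons_cons_cons :
    RisingOn τ (x :: y :: z :: l) ↔ τ x y z = true ∧ RisingOn τ (y :: z :: l) := by
  refine ⟨fun h => ⟨by simpa using h 0 (by simp), h.tail⟩, fun ⟨hxyz, h⟩ i hi => ?_⟩
  cases i with
  | zero => simpa using hxyz
  | succ i => simpa using h i (by simp at hi ⊢; omega)

variable [PartialOrder α]

theorem satChain_iff :
    SatChain x t l ↔ l.IsChain (· ⋖ ·) ∧ l.head? = some x ∧ l.getLast? = some t :=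
  Iff.rfl

theorem not_satChain_nil : ¬ SatChain x t ([] : List α) := by
  simp [satChain_iff]

theorem satChain_singleton_iff {a : α} : SatChain x t [a] ↔ a = x ∧ a = t := by
  simp [satChain_iff, eq_comm]

theorem satChain_cons_cons_iff {a b : α} :
    SatChain x t (a :: b :: l) ↔ a = x ∧ a ⋖ b ∧ SatChain b t (b :: l) := by
  simp only [satChain_iff, List.isChain_cons_cons, List.head?_cons, Option.some.injEq,
    List.getLast?_cons_cons]
  tauto

theorem SatChain.exists_cons_cons (h : SatChain x t l) (hxt : x ≠ t) :
    ∃ y l', l = x :: y :: l' := by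
  match l, h with
  | [], h => exact absurd h not_satChain_nil
  | [a], h =>
    obtain ⟨rfl, rfl⟩ := satChain_singleton_iff.1 h
    exact absurd rfl hxt
  | a :: b :: l', h => exact ⟨b, l', by rw [(satChain_cons_cons_iff.1 h).1]⟩

theorem SatChain.grade_add_length [GradeOrder ℕ α] (h : SatChain x t l) :
    grade ℕ x + l.length = grade ℕ t + 1 := by
  induction l generalizing x with
  | nil => exact absurd h not_satChain_nil
  | cons a l ih =>
    rcases l with _ | ⟨b, l⟩
    · obtain ⟨rfl, rfl⟩ := satChain_singleton_iff.1 h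
      rfl
    · obtain ⟨rfl, hab, h⟩ := satChain_cons_cons_iff.1 h
      have := Nat.covBy_iff_add_one_eq.1 (hab.grade ℕ)
      have := ih h
      simp only [List.length_cons] at this ⊢
      omega

theorem IsRLabeling.isTripleAssignment {Λ : Type*} {sim : Λ → Λ → Prop} [DecidableRel sim]
    {lab : α → α → Λ} (h : IsRLabeling sim lab) :
    IsTripleAssignment fun x y z => decide (sim (lab x y) (lab y z)) := by
  simpa [IsTripleAssignment, RisingOn, IsRLabeling] using h

namespace IsTripleAssignment

variable (hτ : IsTripleAssignment τ)
include hτ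

theorem eq_of_covBy_of_covBy {z' : α} (hyz : y ⋖ z) (hzw : z ⋖ w) (hyz' : y ⋖ z')
    (hz'w : z' ⋖ w) (h : τ y z w = true) (h' : τ y z' w = true) : z = z' := by
  have hsat {a} (hya : y ⋖ a) (haw : a ⋖ w) : SatChain y w [y, a, w] :=
    satChain_cons_cons_iff.2 ⟨rfl, hya,
      satChain_cons_cons_iff.2 ⟨rfl, haw, satChain_singleton_iff.2 ⟨rfl, rfl⟩⟩⟩
  simpa using (hτ y w (hyz.lt.trans hzw.lt)).unique
    ⟨hsat hyz hzw, risingOn_cons_cons_cons.2 ⟨h, risingOn_pair⟩⟩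
    ⟨hsat hyz' hz'w, risingOn_cons_cons_cons.2 ⟨h', risingOn_pair⟩⟩

theorem exists_of_grade_eq_add_three [GradeOrder ℕ α] (hxw : x < w)
    (hgr : grade ℕ w = grade ℕ x + 3) :
    ∃ y z, x ⋖ y ∧ y ⋖ z ∧ z ⋖ w ∧ τ x y z = true ∧ τ y z w = true := by
  obtain ⟨l, ⟨hsat, hrise⟩, -⟩ := hτ x w hxw
  have hlen : l.length = 4 := by have := hsat.grade_add_length; omega
  match l, hlen, hsat, hrise with
  | [a, b, c, d], _, hsat, hrise =>
    obtain ⟨rfl, hab, -, hbc, -, hcd, -, rfl⟩ := by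
      simpa only [satChain_cons_cons_iff, satChain_singleton_iff] using hsat
    exact ⟨b, c, hab, hbc, hcd, by simpa using hrise 0 (by simp),
      by simpa using hrise 1 (by simp)⟩

theorem exists_risingOn_cons_cons {z₀ : α} {r₀ : List α} (hyt : y < t) (hz₀t : z₀ < t)
    (hcov : ∀ z', y ⋖ z' → z' = z ∨ z' = z₀) (hyz : y ⋖ z) (hzw : z ⋖ w)
    (hyzw : τ y z w = true) (h₀ : SatChain z₀ t (z₀ :: w :: r₀))
    (hr₀ : RisingOn τ (z₀ :: w :: r₀)) :
    ∃ l, SatChain z t (z :: l) ∧ RisingOn τ (y :: z :: l) := by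
  obtain ⟨l, ⟨hsat, hrise⟩, -⟩ := hτ y t hyt
  obtain ⟨z', l, rfl⟩ := hsat.exists_cons_cons hyt.ne
  obtain ⟨-, hyz', hsat⟩ := satChain_cons_cons_iff.1 hsat
  rcases hcov z' hyz' with rfl | rfl
  · exact ⟨l, hsat, hrise⟩
  · obtain rfl : l = w :: r₀ :=
      List.cons_injective ((hτ _ t hz₀t).unique ⟨hsat, hrise.tail⟩ ⟨h₀, hr₀⟩)
    obtain rfl : z = z' := hτ.eq_of_covBy_of_covBy hyz hzw hyz'
      (satChain_cons_cons_iff.1 h₀).2.1 hyzw (risingOn_cons_cons_cons.1 hrise).1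
    exact ⟨w :: r₀, h₀, hrise⟩

end IsTripleAssignment

end Chains

namespace Glue

variable {n : ℕ} {x y : Glue n}

@[simp] theorem rk_bot : (⊥ : Glue n).rk = 0 := rfl

@[simp] theorem rk_top : (⊤ : Glue n).rk = n := rfl

theorem lt_iff : x < y ↔ x.rk < y.rk ∧ (x.copy = y.copy ∨ x.rk = 0 ∨ y.rk = n) := by
  refine ⟨fun h => (h.le.resolve_left h.ne).imp_left id, fun h => ?_⟩
  exact lt_of_le_of_ne (Or.inr h) fun hxy => by subst hxy; omega

theorem rk_covBy_rk (h : x ⋖ y) : x.rk ⋖ y.rk := by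
  obtain ⟨hrk, hcopy⟩ := lt_iff.1 h.lt
  rw [Nat.covBy_iff_add_one_eq]
  by_contra hne
  -- an element of rank `x.rk + 1` strictly between `x` and `y`, in the copy of `y` unless `y = ⊤`
  let c : Glue n := ⟨x.rk + 1, false, if y.rk = n then x.copy else y.copy,
    by have := y.hle; omega, by have := y.hle; omega⟩
  refine h.2 (c := c) (lt_iff.2 ⟨by simp [c], ?_⟩) (lt_iff.2 ⟨by simp [c]; omega, ?_⟩) <;>
    simp only [c] <;> split_ifs <;> tauto

instance : GradeOrder ℕ (Glue n) where
  grade := rk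
  grade_strictMono _ _ h := (lt_iff.1 h).1
  covBy_grade _ _ := rk_covBy_rk

@[simp] theorem grade_eq (x : Glue n) : grade ℕ x = x.rk := rfl

theorem rk_eq_of_covBy (h : x ⋖ y) : y.rk = x.rk + 1 :=
  (Nat.covBy_iff_add_one_eq.1 (rk_covBy_rk h)).symm

theorem copy_eq_of_lt (h : x < y) (hx : x.rk ≠ 0) (hy : y.rk ≠ n) : x.copy = y.copy := by
  have := (lt_iff.1 h).2
  tauto

theorem eq_or_eq_of_ne {a b c : Glue n} (hab : a.rk = b.rk) (hac : a.rk = c.rk)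
    (hab' : a.copy = b.copy) (hac' : a.copy = c.copy) (hbc : b ≠ c) : a = b ∨ a = c := by
  have key : ∀ s₁ s₂ s₃ : Bool, s₁ = s₂ ∨ s₁ = s₃ ∨ s₂ = s₃ := by decide
  rcases key a.side b.side c.side with h | h | h
  · exact .inl (ext' hab h hab')
  · exact .inr (ext' hac h hac')
  · exact absurd (ext' (hab.symm.trans hac) h (hab'.symm.trans hac')) hbc

theorem exists_risingOn_through_copy (hn : 4 ≤ n) {τ : Glue n → Glue n → Glue n → Bool}
    (hτ : IsTripleAssignment τ) (q : Bool) :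
    ∃ y z l, SatChain ⊥ ⊤ (⊥ :: y :: z :: l) ∧ RisingOn τ (⊥ :: y :: z :: l) ∧ z.copy = q := by
  obtain ⟨z₀, hz₀, hz₀q⟩ : ∃ z₀ : Glue n, z₀.rk = 2 ∧ z₀.copy = q :=
    ⟨⟨2, false, q, by omega, by omega⟩, rfl, rfl⟩
  have hz₀t : z₀ < ⊤ := lt_iff.2 ⟨by simp; omega, Or.inr (Or.inr rfl)⟩
  obtain ⟨l₀, ⟨hsat₀, hrise₀⟩, -⟩ := hτ z₀ ⊤ hz₀t
  obtain ⟨w, r₀, rfl⟩ := hsat₀.exists_cons_cons hz₀t.ne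
  have hz₀w := (satChain_cons_cons_iff.1 hsat₀).2.1
  have hw : w.rk = 3 := by have := rk_eq_of_covBy hz₀w; omega
  have hwq : w.copy = q := hz₀q ▸ (copy_eq_of_lt hz₀w.lt (by omega) (by omega)).symm
  obtain ⟨y, z, hy, hyz, hzw, h₁, h₂⟩ :=
    hτ.exists_of_grade_eq_add_three (bot_le.trans_lt hz₀w.lt) (by simp [hw])
  have hz : z.rk = 2 := by have := rk_eq_of_covBy hzw; omega
  have hyr : y.rk = 1 := by have := rk_eq_of_covBy hy; simpa using this
  have hzq : z.copy = q := hwq ▸ copy_eq_of_lt hzw.lt (by omega) (by omega)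
  have hyq : y.copy = q := hzq ▸ copy_eq_of_lt hyz.lt (by omega) (by omega)
  obtain ⟨l, hsat, hrise⟩ : ∃ l, SatChain z ⊤ (z :: l) ∧ RisingOn τ (y :: z :: l) := by
    by_cases hzz₀ : z = z₀
    · subst hzz₀
      exact ⟨w :: r₀, hsat₀, risingOn_cons_cons_cons.2 ⟨h₂, hrise₀⟩⟩
    refine hτ.exists_risingOn_cons_cons (hyz.lt.trans (hzw.lt.trans_le le_top)) hz₀t
      (fun z' hyz' => ?_) hyz hzw h₂ hsat₀ hrise₀
    have hz' := rk_eq_of_covBy hyz'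
    have hz'q := copy_eq_of_lt hyz'.lt (by omega) (by omega)
    exact eq_or_eq_of_ne (by omega) (by omega) (by rw [← hz'q, hyq, hzq])
      (by rw [← hz'q, hyq, hz₀q]) hzz₀
  exact ⟨y, z, l, satChain_cons_cons_iff.2 ⟨rfl, hy, satChain_cons_cons_iff.2 ⟨rfl, hyz, hsat⟩⟩,
    risingOn_cons_cons_cons.2 ⟨h₁, hrise⟩, hzq⟩

end Glue

/-- For `n ≥ 4`, the poset `P_n` (two butterfly posets glued along
`0̂` and `1̂`) does not admit any triple assignment, and hence does not admit any
`R`-labeling. -/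
theorem glue_no_RLabeling (n : ℕ) (hn : 4 ≤ n) :
    (¬ ∃ τ : Glue n → Glue n → Glue n → Bool, IsTripleAssignment τ) ∧
    ∀ (Λ : Type) (sim : Λ → Λ → Prop) (lab : Glue n → Glue n → Λ),
      ¬ IsRLabeling sim lab := by
  have no_triple (τ : Glue n → Glue n → Glue n → Bool) : ¬ IsTripleAssignment τ := by
    intro hτ
    obtain ⟨y, z, l, hsat, hrise, hz⟩ := Glue.exists_risingOn_through_copy hn hτ false
    obtain ⟨y', z', l', hsat', hrise', hz'⟩ := Glue.exists_risingOn_through_copy hn hτ true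
    have hbt : (⊥ : Glue n) < ⊤ := Glue.lt_iff.2 ⟨by simp; omega, Or.inr (Or.inl rfl)⟩
    obtain ⟨-, rfl, -⟩ := by simpa using (hτ ⊥ ⊤ hbt).unique ⟨hsat, hrise⟩ ⟨hsat', hrise'⟩
    exact Bool.false_ne_true (hz.symm.trans hz')
  refine ⟨fun ⟨τ, hτ⟩ => no_triple τ hτ, fun Λ sim lab hR => ?_⟩
  classical
  exact no_triple _ hR.isTripleAssignment
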